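/- For the Cauchy CDF sigmoid f_C(x) = (1/π)·arctan(x) + 1/2, the function softmin_{f_C}(x, 0) := x · f_C(−x) is strictly monotonically increasing in x; its derivative equals 1/2 − (1/π)·arctan(x) − (1/π)·x/(1+x²), which lies strictly in (0, 1) for all real x. -/

import Mathlib

/-!
Write `θ = arctan x ∈ (-π/2, π/2)`. Since `2x / (1 + x²) = sin 2θ`, the derivative of
`x · f_C(-x)` is `(π - 2θ - sin 2θ) / (2π)`, and both bounds reduce to `sin t < t` for `t > 0`:
positivity to `sin (π - 2θ) < π - 2θ`, and the bound by `1` to `sin (π + 2θ) < π + 2θ`.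
-/

open Real

noncomputable def fC (x : ℝ) : ℝ := (1/π) * arctan x + 1/2

namespace Real

theorem sin_two_mul_arctan (x : ℝ) : sin (2 * arctan x) = 2 * x / (1 + x ^ 2) := by
  have hsqrt : √(1 + x ^ 2) ^ 2 = 1 + x ^ 2 := sq_sqrt (by positivity)
  rw [sin_two_mul, sin_arctan, cos_arctan, mul_assoc, div_mul_div_comm, mul_one, ← sq, hsqrt,
    mul_div_assoc]

theorem abs_arctan_add_div_one_add_sq_lt (x : ℝ) : |arctan x + x / (1 + x ^ 2)| < π / 2 := by
  have hx : x / (1 + x ^ 2) = sin (2 * arctan x) / 2 := by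
    rw [sin_two_mul_arctan]; ring
  have hlo := neg_pi_div_two_lt_arctan x
  have hhi := arctan_lt_pi_div_two x
  have hsub : sin (π - 2 * arctan x) < π - 2 * arctan x := sin_lt (by linarith)
  have hadd : sin (π + 2 * arctan x) < π + 2 * arctan x := sin_lt (by linarith)
  rw [sin_pi_sub] at hsub
  rw [add_comm, sin_add_pi] at hadd
  rw [hx, abs_lt]
  constructor <;> linarith

end Real

theorem hasDerivAt_fC (x : ℝ) : HasDerivAt fC (1 / π * (1 / (1 + x ^ 2))) x :=
  ((hasDerivAt_arctan x).const_mul (1 / π)).add_const (1 / 2)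

theorem hasDerivAt_mul_fC_neg (x : ℝ) :
    HasDerivAt (fun y : ℝ => y * fC (-y))
      (1/2 - (1/π) * arctan x - (1/π) * (x / (1 + x^2))) x := by
  have hcomp : HasDerivAt (fun y : ℝ => fC (-y)) (1 / π * (1 / (1 + x ^ 2)) * -1) x := by
    have h := (hasDerivAt_fC (-x)).comp x (hasDerivAt_neg x)
    rwa [neg_sq] at h
  refine ((hasDerivAt_id' x).mul hcomp).congr_deriv ?_
  simp only [fC, arctan_neg]
  ring

theorem one_half_sub_arctan_div_pi_mem_Ioo (x : ℝ) :
    1/2 - (1/π) * arctan x - (1/π) * (x / (1 + x^2)) ∈ Set.Ioo (0 : ℝ) 1 := by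
  obtain ⟨hlo, hhi⟩ := abs_lt.mp (abs_arctan_add_div_one_add_sq_lt x)
  have hπ := pi_pos
  have hrw : 1/2 - (1/π) * arctan x - (1/π) * (x / (1 + x^2))
      = (π / 2 - (arctan x + x / (1 + x ^ 2))) / π := by
    field_simp
    ring
  rw [hrw, Set.mem_Ioo, lt_div_iff₀ hπ, div_lt_iff₀ hπ]
  constructor <;> linarith

theorem stmt_1 :
    StrictMono (fun x : ℝ => x * fC (-x)) ∧
    ∀ x : ℝ,
      deriv (fun y : ℝ => y * fC (-y)) x
        = 1/2 - (1/π) * arctan x - (1/π) * (x / (1 + x^2)) ∧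
      (1/2 - (1/π) * arctan x - (1/π) * (x / (1 + x^2))) ∈ Set.Ioo (0 : ℝ) 1 := by
  have hderiv x := (hasDerivAt_mul_fC_neg x).deriv
  have hmem := one_half_sub_arctan_div_pi_mem_Ioo
  exact ⟨strictMono_of_deriv_pos fun x => (hderiv x).symm ▸ (hmem x).1,
    fun x => ⟨hderiv x, hmem x⟩⟩
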